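/- For any fixed multicast power P_mu ∈ [0,P), the optimal value of P2, i.e., the supremum of Σ_m α_m SE_m over all feasible points, equals (1 − (U+G)/T)·Σ_{m=1}^U α_m log₂(1 + N p_m^{dl*} θ_m* / (1 + β_m P)), where θ_m* = E_m β_m²/(1 + E_m β_m), p_m^{dl*} = max{0, α_m/(ν ln 2) − (1 + β_m P)/(N θ_m*)}, and ν > 0 is chosen so that Σ_{m=1}^U p_m^{dl*} = P − P_mu; this value is attained at τ* = U+G, p_m^{up*} = E_m/(U+G), and downlink powers {p_m^{dl*}}. -/

import Mathlib

open Finset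

noncomputable section

/-- Effective estimation quality `θ_m = τ p_m^{up} β_m² / (1 + τ p_m^{up} β_m)`. -/
def thetaUn {U : ℕ} (β : Fin U → ℝ) (τ : ℕ) (pup : Fin U → ℝ) (m : Fin U) : ℝ :=
  (τ : ℝ) * pup m * (β m) ^ 2 / (1 + (τ : ℝ) * pup m * β m)

/-- `SINR_m = N p_m^{dl} θ_m / (1 + β_m (P_mu + Σ_u p_u^{dl}))`. -/
def sinrUn {U : ℕ} (N : ℕ) (Pmu : ℝ) (β : Fin U → ℝ) (τ : ℕ)
    (pup pdl : Fin U → ℝ) (m : Fin U) : ℝ :=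
  (N : ℝ) * pdl m * thetaUn β τ pup m / (1 + β m * (Pmu + ∑ u, pdl u))

/-- `SE_m = (1 - τ/T) log₂(1 + SINR_m)`. -/
def seUn {U : ℕ} (N T : ℕ) (Pmu : ℝ) (β : Fin U → ℝ) (τ : ℕ)
    (pup pdl : Fin U → ℝ) (m : Fin U) : ℝ :=
  (1 - (τ : ℝ) / (T : ℝ)) * Real.logb 2 (1 + sinrUn N Pmu β τ pup pdl m)

/-- The weighted sum spectral efficiency objective `Σ_m α_m SE_m` of problem P2. -/
def objUn {U : ℕ} (N T : ℕ) (Pmu : ℝ) (β α : Fin U → ℝ) (τ : ℕ)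
    (pup pdl : Fin U → ℝ) : ℝ :=
  ∑ m, α m * seUn N T Pmu β τ pup pdl m

/-- Feasibility for problem P2 with fixed multicast power `Pmu`. -/
def feasUn {U : ℕ} (G T : ℕ) (P Pmu : ℝ) (E : Fin U → ℝ) (τ : ℕ)
    (pup pdl : Fin U → ℝ) : Prop :=
  U + G ≤ τ ∧ τ ≤ T ∧
    (∀ m, 0 ≤ pup m ∧ (τ : ℝ) * pup m ≤ E m) ∧
    (∀ m, 0 ≤ pdl m) ∧ ∑ m, pdl m ≤ P - Pmu

/-- `θ_m* = E_m β_m² / (1 + E_m β_m)`: estimation quality with full pilot energy. -/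
def thetaStarUn {U : ℕ} (β E : Fin U → ℝ) (m : Fin U) : ℝ :=
  E m * (β m) ^ 2 / (1 + E m * β m)

/-- Water-filling downlink powers `p_m^{dl*} = max{0, α_m/(ν ln 2) - (1+β_m P)/(N θ_m*)}`. -/
def pdlStarUn {U : ℕ} (N : ℕ) (P : ℝ) (β E α : Fin U → ℝ) (ν : ℝ) (m : Fin U) : ℝ :=
  max 0 (α m / (ν * Real.log 2) - (1 + β m * P) / ((N : ℝ) * thetaStarUn β E m))

/-!
The prelog factor `1 - τ/T` is largest for the shortest pilot `τ = U + G`, and `θ_m` increases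
with the pilot energy `τ p_m^{up} ≤ E_m`, so the pilot stage is optimal at full energy in the
shortest pilot. Scaling a feasible downlink power vector up to the full budget `P - P_mu` raises
every SINR, because the interference term `1 + β_m (P_mu + Σ p)` grows by a smaller factor than
the signal. At full budget every denominator is `1 + β_m P`, and what remains is maximising the
concave `Σ α_m log₂ (1 + c_m p_m)`, `c_m = N θ_m* / (1 + β_m P)`, under a sum-power constraint,
which is solved by water-filling.
-/

open Real

lemma mul_sq_div_one_add_mul_le_of_le {b s e : ℝ} (hb : 0 ≤ b) (hs : 0 ≤ s) (hse : s ≤ e) :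
    s * b ^ 2 / (1 + s * b) ≤ e * b ^ 2 / (1 + e * b) := by
  rw [div_le_div_iff₀ (by positivity) (by nlinarith)]
  nlinarith [mul_le_mul_of_nonneg_right hse (sq_nonneg b), mul_nonneg hb (sq_nonneg b)]

lemma log_sub_log_le_div {x y : ℝ} (hx : 0 < x) (hy : 0 < y) :
    log x - log y ≤ (x - y) / y := by
  have h := log_le_sub_one_of_pos (div_pos hx hy)
  rwa [log_div hx.ne' hy.ne', div_sub_one hy.ne'] at h

/-- Tangent line of the concave `x ↦ a log₂ (1 + c x)` at the water-filling level `xs`: its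
slope `a c / ((1 + c xs) ln 2)` equals `ν` when `xs > 0` and is at most `ν` when `xs = 0`. -/
lemma mul_logb_one_add_mul_le_waterfill {a c ν x xs : ℝ} (ha : 0 ≤ a) (hc : 0 < c)
    (hν : 0 < ν) (hx : 0 ≤ x) (hxs : xs = max 0 (a / (ν * log 2) - 1 / c)) :
    a * logb 2 (1 + c * x) ≤ a * logb 2 (1 + c * xs) + ν * (x - xs) := by
  have hlog2 : 0 < log 2 := log_pos one_lt_two
  have hxs0 : 0 ≤ xs := hxs ▸ le_max_left _ _
  have hdxs : 0 < 1 + c * xs := by positivity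
  have tangent : log (1 + c * x) - log (1 + c * xs) ≤ c * (x - xs) / (1 + c * xs) := by
    have := log_sub_log_le_div (by positivity : 0 < 1 + c * x) hdxs
    rwa [show 1 + c * x - (1 + c * xs) = c * (x - xs) by ring] at this
  have slope : a * c / ((1 + c * xs) * log 2) * (x - xs) ≤ ν * (x - xs) := by
    rcases le_total (a / (ν * log 2) - 1 / c) 0 with h | h
    · rw [max_eq_left h] at hxs
      subst hxs
      have hac : a * c ≤ ν * log 2 := by
        rw [sub_nonpos, div_le_div_iff₀ (by positivity) hc] at h
        linarith
      rw [sub_zero, mul_zero, add_zero, one_mul]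
      exact mul_le_mul_of_nonneg_right ((div_le_iff₀ hlog2).2 hac) hx
    · rw [max_eq_right h] at hxs
      have ha' : 0 < a := by
        have : 0 < a / (ν * log 2) := by linarith [one_div_pos.2 hc]
        exact (div_pos_iff_of_pos_right (by positivity)).1 this
      have : 1 + c * xs = c * a / (ν * log 2) := by
        rw [hxs]
        field_simp
        ring
      rw [this]
      exact le_of_eq (by field_simp)
  have hlogb : a * logb 2 (1 + c * x) - a * logb 2 (1 + c * xs)
      = a * (log (1 + c * x) - log (1 + c * xs)) / log 2 := by
    simp only [logb]
    ring
  have : a * (log (1 + c * x) - log (1 + c * xs)) / log 2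
      ≤ a * c / ((1 + c * xs) * log 2) * (x - xs) := by
    calc a * (log (1 + c * x) - log (1 + c * xs)) / log 2
        ≤ a * (c * (x - xs) / (1 + c * xs)) / log 2 := by gcongr
      _ = a * c / ((1 + c * xs) * log 2) * (x - xs) := by field_simp
  linarith

lemma sum_mul_logb_one_add_mul_le_waterfill {ι : Type*} [Fintype ι] {a c x xs : ι → ℝ} {ν : ℝ}
    (ha : ∀ i, 0 ≤ a i) (hc : ∀ i, 0 < c i) (hν : 0 < ν) (hx : ∀ i, 0 ≤ x i)
    (hxs : ∀ i, xs i = max 0 (a i / (ν * log 2) - 1 / c i)) (hsum : ∑ i, x i ≤ ∑ i, xs i) :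
    ∑ i, a i * logb 2 (1 + c i * x i) ≤ ∑ i, a i * logb 2 (1 + c i * xs i) := by
  calc ∑ i, a i * logb 2 (1 + c i * x i)
      ≤ ∑ i, (a i * logb 2 (1 + c i * xs i) + ν * (x i - xs i)) :=
        sum_le_sum fun i _ => mul_logb_one_add_mul_le_waterfill (ha i) (hc i) hν (hx i) (hxs i)
    _ = ∑ i, a i * logb 2 (1 + c i * xs i) + ν * (∑ i, x i - ∑ i, xs i) := by
        rw [sum_add_distrib, ← mul_sum, sum_sub_distrib]
    _ ≤ ∑ i, a i * logb 2 (1 + c i * xs i) := by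
        nlinarith

lemma div_add_mul_le_div_mul_div_add_mul {a b x S B : ℝ} (ha : 0 < a) (hb : 0 ≤ b)
    (hx : 0 ≤ x) (hxS : x ≤ S) (hSB : S ≤ B) :
    x / (a + b * S) ≤ B / S * x / (a + b * B) := by
  rcases (hx.trans hxS).eq_or_lt with hS | hS
  · obtain rfl : x = 0 := le_antisymm (hS ▸ hxS) hx
    simp
  · rw [div_le_div_iff₀ (by positivity) (by nlinarith), div_mul_eq_mul_div, div_mul_eq_mul_div,
      le_div_iff₀ hS]
    nlinarith [mul_le_mul_of_nonneg_left hSB (mul_nonneg hx ha.le)]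

lemma div_mul_le_of_le {S B : ℝ} (hS : 0 ≤ S) (hSB : S ≤ B) : B / S * S ≤ B := by
  rcases hS.eq_or_lt with h | h
  · rw [← h, div_zero, zero_mul]
    exact hS.trans hSB
  · rw [div_mul_cancel₀ _ h.ne']

lemma one_sub_natCast_div_nonneg {n T : ℕ} (h : n ≤ T) : 0 ≤ 1 - (n : ℝ) / T :=
  sub_nonneg.2 (div_le_one_of_le₀ (Nat.cast_le.2 h) T.cast_nonneg)

lemma one_sub_natCast_div_le_of_le {n τ T : ℕ} (h : n ≤ τ) :
    1 - (τ : ℝ) / T ≤ 1 - (n : ℝ) / T :=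
  sub_le_sub_left (div_le_div_of_nonneg_right (Nat.cast_le.2 h) T.cast_nonneg) 1

section

variable {U G N T : ℕ} {P Pmu ν : ℝ} {β E α : Fin U → ℝ}

def gainStarUn (N : ℕ) (P : ℝ) (β E : Fin U → ℝ) (m : Fin U) : ℝ :=
  (N : ℝ) * thetaStarUn β E m / (1 + β m * P)

lemma thetaStarUn_pos (hβ : ∀ m, 0 < β m) (hE : ∀ m, 0 < E m) (m : Fin U) :
    0 < thetaStarUn β E m := by
  have := hβ m
  have := hE m
  unfold thetaStarUn
  positivity

lemma thetaUn_nonneg {τ : ℕ} {pup : Fin U → ℝ} (hβ : ∀ m, 0 < β m) (hpup : ∀ m, 0 ≤ pup m)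
    (m : Fin U) : 0 ≤ thetaUn β τ pup m := by
  have := hβ m
  have := hpup m
  unfold thetaUn
  positivity

lemma thetaUn_le_thetaStarUn {τ : ℕ} {pup : Fin U → ℝ} (hβ : ∀ m, 0 < β m)
    (hpup : ∀ m, 0 ≤ pup m ∧ (τ : ℝ) * pup m ≤ E m) (m : Fin U) :
    thetaUn β τ pup m ≤ thetaStarUn β E m :=
  mul_sq_div_one_add_mul_le_of_le (hβ m).le (mul_nonneg τ.cast_nonneg (hpup m).1) (hpup m).2

lemma sinrUn_nonneg {τ : ℕ} {pup pdl : Fin U → ℝ} (hβ : ∀ m, 0 < β m) (hPmu0 : 0 ≤ Pmu)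
    (hpup : ∀ m, 0 ≤ pup m) (hpdl : ∀ m, 0 ≤ pdl m) (m : Fin U) :
    0 ≤ sinrUn N Pmu β τ pup pdl m := by
  have := hβ m
  have := hpdl m
  have := thetaUn_nonneg (τ := τ) hβ hpup m
  have := sum_nonneg fun u (_ : u ∈ univ) => hpdl u
  rw [sinrUn]
  positivity

lemma gainStarUn_pos (hN : 1 ≤ N) (hP : 0 < P) (hβ : ∀ m, 0 < β m) (hE : ∀ m, 0 < E m)
    (m : Fin U) : 0 < gainStarUn N P β E m := by
  have := hβ m
  have := thetaStarUn_pos hβ hE m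
  have : (0 : ℝ) < N := by exact_mod_cast hN
  unfold gainStarUn
  positivity

lemma pdlStarUn_eq_max (m : Fin U) :
    pdlStarUn N P β E α ν m = max 0 (α m / (ν * log 2) - 1 / gainStarUn N P β E m) := by
  rw [gainStarUn, one_div_div, pdlStarUn]

lemma sinrUn_le_gainStarUn_mul {τ : ℕ} {pup pdl : Fin U → ℝ} (hβ : ∀ m, 0 < β m)
    (hPmu0 : 0 ≤ Pmu) (hpup : ∀ m, 0 ≤ pup m ∧ (τ : ℝ) * pup m ≤ E m) (hpdl : ∀ m, 0 ≤ pdl m)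
    (hsum : ∑ m, pdl m ≤ P - Pmu) (m : Fin U) :
    sinrUn N Pmu β τ pup pdl m
      ≤ gainStarUn N P β E m * ((P - Pmu) / (∑ u, pdl u) * pdl m) := by
  have hθ := thetaUn_le_thetaStarUn hβ hpup m
  have hθ0 := thetaUn_nonneg (τ := τ) hβ (fun m => (hpup m).1) m
  have hβm := hβ m
  calc sinrUn N Pmu β τ pup pdl m
      = N * thetaUn β τ pup m * (pdl m / ((1 + β m * Pmu) + β m * ∑ u, pdl u)) := by
        rw [sinrUn]
        ring
    _ ≤ N * thetaStarUn β E m * (pdl m / ((1 + β m * Pmu) + β m * ∑ u, pdl u)) := by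
        have := hpdl m
        have := sum_nonneg fun u (_ : u ∈ univ) => hpdl u
        gcongr
    _ ≤ N * thetaStarUn β E m * ((P - Pmu) / (∑ u, pdl u) * pdl m
          / ((1 + β m * Pmu) + β m * (P - Pmu))) :=
        mul_le_mul_of_nonneg_left
          (div_add_mul_le_div_mul_div_add_mul (by positivity) hβm.le (hpdl m)
            (single_le_sum (fun u _ => hpdl u) (mem_univ m)) hsum)
          (mul_nonneg N.cast_nonneg (hθ0.trans hθ))
    _ = gainStarUn N P β E m * ((P - Pmu) / (∑ u, pdl u) * pdl m) := by
        rw [gainStarUn]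
        ring

lemma gainStarUn_mul (m : Fin U) (x : ℝ) :
    gainStarUn N P β E m * x = N * x * thetaStarUn β E m / (1 + β m * P) := by
  rw [gainStarUn]
  ring

lemma objUn_eq_mul_sum {τ : ℕ} {pup pdl : Fin U → ℝ} :
    objUn N T Pmu β α τ pup pdl
      = (1 - (τ : ℝ) / T) * ∑ m, α m * logb 2 (1 + sinrUn N Pmu β τ pup pdl m) := by
  rw [objUn, mul_sum]
  exact sum_congr rfl fun m _ => by rw [seUn]; ring

lemma feasUn_optimalPoint (hT : U + G ≤ T) (hE : ∀ m, 0 < E m)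
    (hbudget : ∑ m, pdlStarUn N P β E α ν m = P - Pmu) :
    feasUn G T P Pmu E (U + G) (fun m => E m / ((U + G : ℕ) : ℝ)) (pdlStarUn N P β E α ν) := by
  refine ⟨le_rfl, hT, fun m => ⟨div_nonneg (hE m).le (U + G).cast_nonneg, ?_⟩,
    fun m => le_max_left _ _, hbudget.le⟩
  have : ((U + G : ℕ) : ℝ) ≠ 0 := by
    have := m.pos
    positivity
  rw [mul_div_cancel₀ _ this]

lemma objUn_optimalPoint (hbudget : ∑ m, pdlStarUn N P β E α ν m = P - Pmu) :
    objUn N T Pmu β α (U + G) (fun m => E m / ((U + G : ℕ) : ℝ)) (pdlStarUn N P β E α ν)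
      = (1 - ((U + G : ℕ) : ℝ) / T) *
          ∑ m, α m * logb 2 (1 +
            N * pdlStarUn N P β E α ν m * thetaStarUn β E m / (1 + β m * P)) := by
  rw [objUn_eq_mul_sum]
  congr 1
  refine sum_congr rfl fun m _ => ?_
  have : ((U + G : ℕ) : ℝ) ≠ 0 := by
    have := m.pos
    positivity
  rw [sinrUn, hbudget, thetaUn, mul_div_cancel₀ _ this, add_sub_cancel, thetaStarUn]

lemma objUn_le_of_feasUn {τ : ℕ} {pup pdl : Fin U → ℝ} (hN : 1 ≤ N) (hP : 0 < P)
    (hβ : ∀ m, 0 < β m) (hE : ∀ m, 0 < E m) (hα : ∀ m, 0 < α m) (hPmu0 : 0 ≤ Pmu) (hν : 0 < ν)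
    (hbudget : ∑ m, pdlStarUn N P β E α ν m = P - Pmu)
    (hfeas : feasUn G T P Pmu E τ pup pdl) :
    objUn N T Pmu β α τ pup pdl
      ≤ (1 - ((U + G : ℕ) : ℝ) / T) *
          ∑ m, α m * logb 2 (1 +
            N * pdlStarUn N P β E α ν m * thetaStarUn β E m / (1 + β m * P)) := by
  obtain ⟨hτG, hτT, hpup, hpdl, hsum⟩ := hfeas
  have hS0 : 0 ≤ ∑ u, pdl u := sum_nonneg fun u _ => hpdl u
  -- `pdl` rescaled to the full budget; when `pdl = 0` this is `0`, since `_ / 0 = 0`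
  set x := fun m => (P - Pmu) / (∑ u, pdl u) * pdl m
  have hx0 : ∀ m, 0 ≤ x m := fun m => mul_nonneg (div_nonneg (hS0.trans hsum) hS0) (hpdl m)
  have hxsum : ∑ m, x m ≤ ∑ m, pdlStarUn N P β E α ν m := by
    rw [hbudget, ← mul_sum]
    exact div_mul_le_of_le hS0 hsum
  have hsinr0 := sinrUn_nonneg (N := N) (τ := τ) hβ hPmu0 (fun m => (hpup m).1) hpdl
  have hfac0 := one_sub_natCast_div_nonneg (T := T) (hτG.trans hτT)
  calc objUn N T Pmu β α τ pup pdl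
      = (1 - (τ : ℝ) / T) * ∑ m, α m * logb 2 (1 + sinrUn N Pmu β τ pup pdl m) :=
        objUn_eq_mul_sum
    _ ≤ (1 - ((U + G : ℕ) : ℝ) / T) * ∑ m, α m * logb 2 (1 + sinrUn N Pmu β τ pup pdl m) :=
        mul_le_mul_of_nonneg_right (one_sub_natCast_div_le_of_le hτG) <| sum_nonneg fun m _ =>
          mul_nonneg (hα m).le (logb_nonneg one_lt_two (by linarith [hsinr0 m]))
    _ ≤ (1 - ((U + G : ℕ) : ℝ) / T) * ∑ m, α m * logb 2 (1 + gainStarUn N P β E m * x m) :=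
        mul_le_mul_of_nonneg_left (sum_le_sum fun m _ => mul_le_mul_of_nonneg_left
          (logb_le_logb_of_le one_lt_two (by linarith [hsinr0 m])
            (by linarith [sinrUn_le_gainStarUn_mul (N := N) hβ hPmu0 hpup hpdl hsum m]))
          (hα m).le) hfac0
    _ ≤ (1 - ((U + G : ℕ) : ℝ) / T) *
          ∑ m, α m * logb 2 (1 + gainStarUn N P β E m * pdlStarUn N P β E α ν m) :=
        mul_le_mul_of_nonneg_left (sum_mul_logb_one_add_mul_le_waterfill (fun m => (hα m).le)
          (gainStarUn_pos hN hP hβ hE) hν hx0 (fun m => pdlStarUn_eq_max m) hxsum) hfac0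
    _ = _ := by simp only [gainStarUn_mul]

end

theorem sse_optimal_value_general
    (U G : ℕ) (N : ℕ) (hN : 1 ≤ N) (T : ℕ) (hT : U + G ≤ T)
    (P : ℝ) (hP : 0 < P)
    (β E α : Fin U → ℝ)
    (hβ : ∀ m, 0 < β m) (hE : ∀ m, 0 < E m) (hα : ∀ m, 0 < α m)
    (Pmu : ℝ) (hPmu0 : 0 ≤ Pmu)
    (ν : ℝ) (hν : 0 < ν)
    (hbudget : ∑ m, pdlStarUn N P β E α ν m = P - Pmu) :
    sSup {v : ℝ | ∃ (τ : ℕ) (pup pdl : Fin U → ℝ),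
        feasUn G T P Pmu E τ pup pdl ∧ v = objUn N T Pmu β α τ pup pdl}
      = (1 - ((U + G : ℕ) : ℝ) / (T : ℝ)) *
          ∑ m, α m * Real.logb 2 (1 +
            (N : ℝ) * pdlStarUn N P β E α ν m * thetaStarUn β E m / (1 + β m * P)) ∧
    objUn N T Pmu β α (U + G) (fun m => E m / ((U + G : ℕ) : ℝ)) (pdlStarUn N P β E α ν)
      = (1 - ((U + G : ℕ) : ℝ) / (T : ℝ)) *
          ∑ m, α m * Real.logb 2 (1 +
            (N : ℝ) * pdlStarUn N P β E α ν m * thetaStarUn β E m / (1 + β m * P)) := by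
  have hattain := objUn_optimalPoint (G := G) (T := T) hbudget
  refine ⟨IsGreatest.csSup_eq ⟨⟨U + G, _, _, feasUn_optimalPoint hT hE hbudget, hattain.symm⟩, ?_⟩,
    hattain⟩
  rintro v ⟨τ, pup, pdl, hfeas, rfl⟩
  exact objUn_le_of_feasUn hN hP hβ hE hα hPmu0 hν hbudget hfeas

/-- Theorem 2 of the paper: for any fixed multicast power
`P_mu ∈ [0,P)` and any water level `ν > 0` with `Σ_m p_m^{dl*} = P - P_mu`, the optimal
value of P2 equals `(1-(U+G)/T) Σ_m α_m log₂(1 + N p_m^{dl*} θ_m* / (1 + β_m P))`, and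
this value is attained at `τ* = U+G`, `p_m^{up*} = E_m/(U+G)`, `{p_m^{dl*}}`. -/
theorem sse_optimal_value
    (U G : ℕ) (hU : 1 ≤ U) (N : ℕ) (hN : 1 ≤ N) (T : ℕ) (hT : U + G ≤ T)
    (P : ℝ) (hP : 0 < P)
    (β E α : Fin U → ℝ)
    (hβ : ∀ m, 0 < β m) (hE : ∀ m, 0 < E m) (hα : ∀ m, 0 < α m)
    (Pmu : ℝ) (hPmu0 : 0 ≤ Pmu) (hPmuP : Pmu < P)
    (ν : ℝ) (hν : 0 < ν)
    (hbudget : ∑ m, pdlStarUn N P β E α ν m = P - Pmu) :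
    sSup {v : ℝ | ∃ (τ : ℕ) (pup pdl : Fin U → ℝ),
        feasUn G T P Pmu E τ pup pdl ∧ v = objUn N T Pmu β α τ pup pdl}
      = (1 - ((U + G : ℕ) : ℝ) / (T : ℝ)) *
          ∑ m, α m * Real.logb 2 (1 +
            (N : ℝ) * pdlStarUn N P β E α ν m * thetaStarUn β E m / (1 + β m * P)) ∧
    objUn N T Pmu β α (U + G) (fun m => E m / ((U + G : ℕ) : ℝ)) (pdlStarUn N P β E α ν)
      = (1 - ((U + G : ℕ) : ℝ) / (T : ℝ)) *
          ∑ m, α m * Real.logb 2 (1 +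
            (N : ℝ) * pdlStarUn N P β E α ν m * thetaStarUn β E m / (1 + β m * P)) :=
  sse_optimal_value_general U G N hN T hT P hP β E α hβ hE hα Pmu hPmu0 ν hν hbudget

end
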